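/- arXiv:2004.11627 — 3 statements merged into one kernel-verified Lean document; each statement's English description precedes it below -/
import Mathlib

section
/- For x → +∞, the limit of (Γ((x+1)/2)/Γ(x/2))² · (1/x) equals 1/2. -/
open Real Filter

lemma aux_upper (y : ℝ) (hy : 0 < y) :
    Real.Gamma (y + 1/2) ≤ Real.Gamma y * Real.sqrt y := by
  have h := Real.Gamma_mul_add_mul_le_rpow_Gamma_mul_rpow_Gamma hy
    (by linarith : (0:ℝ) < y + 1) one_half_pos one_half_pos (by norm_num)
  rw [show (1/2:ℝ) * y + (1/2) * (y+1) = y + 1/2 by ring, Real.Gamma_add_one hy.ne'] at h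
  have hG := Real.Gamma_pos_of_pos hy
  have e1 : (y * Real.Gamma y) ^ ((1:ℝ)/2) = Real.sqrt y * Real.sqrt (Real.Gamma y) := by
    rw [← Real.sqrt_eq_rpow, Real.sqrt_mul hy.le]
  have e2 : Real.Gamma y ^ ((1:ℝ)/2) = Real.sqrt (Real.Gamma y) :=
    (Real.sqrt_eq_rpow _).symm
  rw [e1, e2] at h
  have hms : Real.sqrt (Real.Gamma y) * Real.sqrt (Real.Gamma y) = Real.Gamma y :=
    Real.mul_self_sqrt hG.le
  nlinarith [Real.sqrt_nonneg y, Real.sqrt_nonneg (Real.Gamma y)]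

lemma aux_lower (y : ℝ) (hy : 0 < y) :
    y * Real.Gamma y ≤ Real.Gamma (y + 1/2) * Real.sqrt (y + 1/2) := by
  have h05 : (0:ℝ) < y + 1/2 := by linarith
  have h := Real.Gamma_mul_add_mul_le_rpow_Gamma_mul_rpow_Gamma h05
    (by linarith : (0:ℝ) < y + 3/2) one_half_pos one_half_pos (by norm_num)
  rw [show (1/2:ℝ) * (y + 1/2) + (1/2) * (y + 3/2) = y + 1 by ring,
    Real.Gamma_add_one hy.ne',
    show (y + 3/2 : ℝ) = (y + 1/2) + 1 by ring,
    Real.Gamma_add_one h05.ne'] at h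
  have hG := Real.Gamma_pos_of_pos h05
  have e1 : ((y + 1/2) * Real.Gamma (y + 1/2)) ^ ((1:ℝ)/2)
      = Real.sqrt (y + 1/2) * Real.sqrt (Real.Gamma (y + 1/2)) := by
    rw [← Real.sqrt_eq_rpow, Real.sqrt_mul h05.le]
  have e2 : Real.Gamma (y + 1/2) ^ ((1:ℝ)/2) = Real.sqrt (Real.Gamma (y + 1/2)) :=
    (Real.sqrt_eq_rpow _).symm
  rw [e1, e2] at h
  have hms : Real.sqrt (Real.Gamma (y + 1/2)) * Real.sqrt (Real.Gamma (y + 1/2))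
      = Real.Gamma (y + 1/2) := Real.mul_self_sqrt hG.le
  nlinarith [Real.sqrt_nonneg (y + 1/2), Real.sqrt_nonneg (Real.Gamma (y + 1/2))]

theorem gamma_ratio_sq_div_tendsto_half :
    Filter.Tendsto (fun x : ℝ => (Real.Gamma ((x + 1) / 2) / Real.Gamma (x / 2)) ^ 2 * (1 / x))
      Filter.atTop (nhds (1 / 2)) := by
  have hlow : Tendsto (fun x : ℝ => x / (2 * (x + 1))) atTop (nhds (1/2)) := by
    have h1 : Tendsto (fun x : ℝ => (x + 1)⁻¹) atTop (nhds 0) :=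
      tendsto_inv_atTop_zero.comp (tendsto_atTop_add_const_right atTop 1 tendsto_id)
    have h2 : Tendsto (fun x : ℝ => (1 - (x + 1)⁻¹) / 2) atTop (nhds ((1 - 0)/2)) :=
      (tendsto_const_nhds.sub h1).div_const 2
    rw [show ((1:ℝ) - 0)/2 = 1/2 by norm_num] at h2
    refine h2.congr' ?_
    filter_upwards [eventually_gt_atTop (0:ℝ)] with x hx
    have hx1 : x + 1 ≠ 0 := by linarith
    rw [div_eq_div_iff (two_ne_zero) (by positivity : (2:ℝ)*(x+1) ≠ 0), sub_mul,
      inv_mul_eq_div, one_mul]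
    rw [mul_div_assoc, div_self hx1]
    ring
  refine tendsto_of_tendsto_of_tendsto_of_le_of_le' hlow tendsto_const_nhds ?_ ?_
  · -- lower bound
    filter_upwards [eventually_gt_atTop (0:ℝ)] with x hx
    have hy : 0 < x / 2 := by linarith
    have h05 : (0:ℝ) < (x+1)/2 := by linarith
    have hG := Real.Gamma_pos_of_pos hy
    have h2 : (x/2) * Real.Gamma (x/2) ≤ Real.Gamma ((x+1)/2) * Real.sqrt ((x+1)/2) := by
      have := aux_lower (x/2) hy
      rwa [show (x/2 + 1/2 : ℝ) = (x+1)/2 by ring] at this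
    have hs : 0 < Real.sqrt ((x+1)/2) := Real.sqrt_pos.mpr h05
    have hr : (x/2) / Real.sqrt ((x+1)/2) ≤ Real.Gamma ((x+1)/2) / Real.Gamma (x/2) :=
      (div_le_div_iff₀ hs hG).mpr h2
    have hrsq : ((x/2) / Real.sqrt ((x+1)/2)) ^ 2
        ≤ (Real.Gamma ((x+1)/2) / Real.Gamma (x/2)) ^ 2 :=
      pow_le_pow_left₀ (by positivity) hr 2
    have heq : ((x/2) / Real.sqrt ((x+1)/2)) ^ 2 = (x/2)^2 / ((x+1)/2) := by
      rw [div_pow, Real.sq_sqrt h05.le]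
    rw [heq] at hrsq
    have hkey : (x/2)^2 / ((x+1)/2) * (1/x) = x / (2 * (x+1)) := by
      field_simp
    calc x / (2 * (x+1)) = (x/2)^2 / ((x+1)/2) * (1/x) := hkey.symm
      _ ≤ (Real.Gamma ((x+1)/2) / Real.Gamma (x/2)) ^ 2 * (1/x) :=
          mul_le_mul_of_nonneg_right hrsq (by positivity)
  · -- upper bound
    filter_upwards [eventually_gt_atTop (0:ℝ)] with x hx
    have hy : 0 < x / 2 := by linarith
    have hG := Real.Gamma_pos_of_pos hy
    have h1 : Real.Gamma ((x+1)/2) ≤ Real.Gamma (x/2) * Real.sqrt (x/2) := by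
      have := aux_upper (x/2) hy
      rwa [show (x/2 + 1/2 : ℝ) = (x+1)/2 by ring] at this
    have hr : Real.Gamma ((x+1)/2) / Real.Gamma (x/2) ≤ Real.sqrt (x/2) :=
      (div_le_iff₀ hG).mpr (by linarith [h1, mul_comm (Real.Gamma (x/2)) (Real.sqrt (x/2))])
    have hrsq : (Real.Gamma ((x+1)/2) / Real.Gamma (x/2)) ^ 2 ≤ x/2 := by
      have := pow_le_pow_left₀ (by positivity :
        (0:ℝ) ≤ Real.Gamma ((x+1)/2) / Real.Gamma (x/2)) hr 2
      rwa [Real.sq_sqrt hy.le] at this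
    calc (Real.Gamma ((x+1)/2) / Real.Gamma (x/2)) ^ 2 * (1/x)
        ≤ (x/2) * (1/x) := mul_le_mul_of_nonneg_right hrsq (by positivity)
      _ = 1/2 := by field_simp
end

section
/- For x → +∞, the limit of Γ(x/2 + 1)/Γ(x/2) − (Γ((x+1)/2)/Γ(x/2))² equals 1/4. -/
open Real Filter

noncomputable def fg (x : ℝ) : ℝ := Real.Gamma (x + 1/2) / Real.Gamma x

lemma fg_pos {x : ℝ} (hx : 0 < x) : 0 < fg x :=
  div_pos (Real.Gamma_pos_of_pos (by linarith)) (Real.Gamma_pos_of_pos hx)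

lemma fg_sq_le {x : ℝ} (hx : 0 < x) : fg x ^ 2 ≤ x := by
  have h1 := Real.Gamma_pos_of_pos hx
  have h2 := Real.Gamma_pos_of_pos (show (0:ℝ) < x + 1 by linarith)
  have hc := Real.convexOn_log_Gamma.2 (Set.mem_Ioi.mpr hx)
    (Set.mem_Ioi.mpr (show (0:ℝ) < x + 1 by linarith))
    (by norm_num : (0:ℝ) ≤ 1/2) (by norm_num : (0:ℝ) ≤ 1/2) (by norm_num)
  simp only [Function.comp_apply, smul_eq_mul] at hc
  rw [show (1/2:ℝ) * x + 1/2 * (x+1) = x + 1/2 by ring] at hc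
  have key : Real.Gamma (x + 1/2) ^ 2 ≤ Real.Gamma x * Real.Gamma (x+1) := by
    have hG : 0 < Real.Gamma (x + 1/2) := Real.Gamma_pos_of_pos (by linarith)
    have : Real.log (Real.Gamma (x + 1/2) ^ 2) ≤ Real.log (Real.Gamma x * Real.Gamma (x+1)) := by
      rw [Real.log_pow, Real.log_mul h1.ne' h2.ne']
      push_cast
      linarith
    exact (Real.log_le_log_iff (by positivity) (by positivity)).mp this
  rw [Real.Gamma_add_one hx.ne'] at key
  rw [fg, div_pow, div_le_iff₀ (by positivity)]
  calc Real.Gamma (x + 1/2) ^ 2 ≤ Real.Gamma x * (x * Real.Gamma x) := key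
    _ = x * Real.Gamma x ^ 2 := by ring

lemma fg_mul {x : ℝ} (hx : 0 < x) : fg x * fg (x + 1/2) = x := by
  have h1 := Real.Gamma_pos_of_pos hx
  have h2 := Real.Gamma_pos_of_pos (show (0:ℝ) < x + 1/2 by linarith)
  have h3 : x + 1/2 + 1/2 = x + 1 := by ring
  rw [fg, fg, h3, Real.Gamma_add_one hx.ne']
  field_simp

lemma fg_sq_ge {x : ℝ} (hx : 1/2 < x) : x - 1/2 ≤ fg x ^ 2 := by
  set y := x - 1/2 with hy
  have hy0 : 0 < y := by simpa [hy] using hx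
  have hfy := fg_pos hy0
  have hmul : fg y * fg x = y := by
    have := fg_mul hy0
    rwa [show y + 1/2 = x by rw [hy]; ring] at this
  have hle := fg_sq_le hy0
  have hfx : fg x = y / fg y := by field_simp [hfy.ne'] at hmul ⊢; linarith [hmul]
  rw [hfx, div_pow, le_div_iff₀ (by positivity)]
  nlinarith [sq_nonneg (fg y), hfy]

lemma fg_succ {x : ℝ} (hx : 0 < x) : fg (x + 1) = (x + 1/2)/x * fg x := by
  have h1 := Real.Gamma_pos_of_pos hx
  have h2 := Real.Gamma_pos_of_pos (show (0:ℝ) < x + 1/2 by linarith)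
  rw [fg, fg, show x + 1 + 1/2 = (x + 1/2) + 1 by ring,
    Real.Gamma_add_one (by positivity : x + 1/2 ≠ 0), Real.Gamma_add_one hx.ne']
  field_simp

lemma key_rec {x : ℝ} (hx : 0 < x) :
    (x + 1) - 1/4 - fg (x+1) ^ 2 = 1/(16*x^2) + ((x+1/2)/x)^2 * (x - 1/4 - fg x ^ 2) := by
  rw [fg_succ hx]
  have hx' : x ≠ 0 := hx.ne'
  field_simp
  ring

lemma fg_sq_ge' {x : ℝ} (hx : 1 ≤ x) : x - 1/4 ≤ fg x ^ 2 := by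
  by_contra hcon
  push_neg at hcon
  set δ := x - 1/4 - fg x ^ 2 with hδ
  have hδ0 : 0 < δ := by simp [hδ]; linarith
  have hfx := fg_pos (show (0:ℝ) < x by linarith)
  have claim : ∀ n : ℕ, δ * fg (x + n) ^ 2 ≤ (x + n - 1/4 - fg (x + n) ^ 2) * fg x ^ 2 := by
    intro n
    induction n with
    | zero => simp [hδ]
    | succ n ih =>
      have hy : (0:ℝ) < x + n := by positivity
      have hrec := key_rec hy
      have hstep : fg (x + n + 1) = ((x + n + 1/2)/(x+n)) * fg (x+n) := fg_succ hy
      have hcast : x + (n+1 : ℕ) = x + n + 1 := by push_cast; ring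
      rw [hcast, hrec, hstep]
      have hc2 : (0:ℝ) ≤ ((x + n + 1/2)/(x+n))^2 := sq_nonneg _
      have h16 : (0:ℝ) ≤ 1/(16*(x+n)^2) * fg x ^ 2 := by positivity
      calc δ * (((x + n + 1/2)/(x+n)) * fg (x+n)) ^ 2
          = ((x + n + 1/2)/(x+n))^2 * (δ * fg (x+n) ^ 2) := by ring
        _ ≤ ((x + n + 1/2)/(x+n))^2 * ((x + n - 1/4 - fg (x + n) ^ 2) * fg x ^ 2) := by
            exact mul_le_mul_of_nonneg_left ih hc2
        _ ≤ (1/(16*(x+n)^2) + ((x+n+1/2)/(x+n))^2 * (x + n - 1/4 - fg (x+n) ^ 2)) * fg x ^ 2 := by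
            nlinarith [sq_nonneg (fg x)]
  -- contradiction
  obtain ⟨n, hn⟩ := exists_nat_gt ((fg x ^ 2 / 4 + δ/2) / δ)
  have hn2 := claim n
  have hge : x + n - 1/2 ≤ fg (x + n) ^ 2 := fg_sq_ge (by push_cast; linarith)
  have hub : x + n - 1/4 - fg (x + n) ^ 2 ≤ 1/4 := by linarith
  have h1 : δ * (x + n - 1/2) ≤ δ * fg (x+n)^2 := by
    exact mul_le_mul_of_nonneg_left hge hδ0.le
  have h2 : (x + n - 1/4 - fg (x + n) ^ 2) * fg x ^ 2 ≤ (1/4) * fg x ^ 2 := by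
    nlinarith [sq_nonneg (fg x)]
  have h3 : δ * (x + n - 1/2) ≤ fg x ^ 2 / 4 := by linarith
  have h4 : (n:ℝ) * δ ≤ fg x ^2 / 4 + δ/2 := by nlinarith
  rw [div_lt_iff₀ hδ0] at hn
  linarith

lemma fg_sq_le' {x : ℝ} (hx : 3/2 ≤ x) : fg x ^ 2 ≤ x - 1/4 + 1/(16*(x - 3/4)) := by
  have hy0 : (0:ℝ) < x - 1/2 := by linarith
  have hfy := fg_pos hy0
  have hmul : fg (x - 1/2) * fg x = x - 1/2 := by
    have := fg_mul hy0
    rwa [show x - 1/2 + 1/2 = x by ring] at this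
  have hge := fg_sq_ge' (show (1:ℝ) ≤ x - 1/2 by linarith)
  have hden : (0:ℝ) < x - 3/4 := by linarith
  have hsq : fg (x - 1/2) ^ 2 * fg x ^ 2 = (x - 1/2)^2 := by rw [← mul_pow, hmul]
  have hkey : fg x ^ 2 * (x - 3/4) ≤ (x - 1/2)^2 := by
    nlinarith [sq_nonneg (fg x)]
  have h2 : (x-1/2)^2/(x-3/4) = x - 1/4 + 1/(16*(x - 3/4)) := by
    rw [show (x-1/2)^2 = (x-1/4)*(x-3/4) + 1/16 by ring, add_div, mul_div_assoc,
      div_self hden.ne', mul_one, div_div]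
  rw [← h2, le_div_iff₀ hden]
  exact hkey

theorem gamma_ratio_diff_tendsto_quarter :
    Filter.Tendsto
      (fun x : ℝ => Real.Gamma (x / 2 + 1) / Real.Gamma (x / 2)
        - (Real.Gamma ((x + 1) / 2) / Real.Gamma (x / 2)) ^ 2)
      Filter.atTop (nhds (1 / 4)) := by
  have heq : ∀ᶠ x : ℝ in atTop,
      Real.Gamma (x / 2 + 1) / Real.Gamma (x / 2)
        - (Real.Gamma ((x + 1) / 2) / Real.Gamma (x / 2)) ^ 2
      = x/2 - fg (x/2) ^ 2 := by
    filter_upwards [eventually_gt_atTop (0:ℝ)] with x hx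
    have hx2 : (0:ℝ) < x/2 := by linarith
    have hG := Real.Gamma_pos_of_pos hx2
    rw [Real.Gamma_add_one hx2.ne', show (x+1)/2 = x/2 + 1/2 by ring]
    rw [fg]
    field_simp
  rw [Filter.tendsto_congr' heq]
  have hle : ∀ᶠ x : ℝ in atTop, x/2 - fg (x/2) ^ 2 ≤ 1/4 := by
    filter_upwards [eventually_ge_atTop (2:ℝ)] with x hx
    have := fg_sq_ge' (show (1:ℝ) ≤ x/2 by linarith)
    linarith
  have hge : ∀ᶠ x : ℝ in atTop, 1/4 - 1/(16*(x/2 - 3/4)) ≤ x/2 - fg (x/2) ^ 2 := by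
    filter_upwards [eventually_ge_atTop (3:ℝ)] with x hx
    have := fg_sq_le' (show (3:ℝ)/2 ≤ x/2 by linarith)
    linarith
  have hlow : Tendsto (fun x : ℝ => 1/4 - 1/(16*(x/2 - 3/4))) atTop (nhds (1/4)) := by
    have h1 : Tendsto (fun x : ℝ => 16*(x/2 - 3/4)) atTop atTop := by
      apply Tendsto.comp (tendsto_id.const_mul_atTop (by norm_num : (0:ℝ) < 16))
      apply tendsto_atTop_add_const_right
      exact tendsto_id.atTop_div_const (by norm_num)
    have h2 : Tendsto (fun x : ℝ => (16*(x/2 - 3/4))⁻¹) atTop (nhds 0) :=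
      h1.inv_tendsto_atTop
    have := (tendsto_const_nhds (x := (1/4:ℝ)) (f := atTop)).sub h2
    simpa [one_div] using this
  exact tendsto_of_tendsto_of_tendsto_of_le_of_le' hlow tendsto_const_nhds hge hle
end

section
/- If f and g are coordinatewise increasing functions on ℝⁿ and μ is a product probability measure, then E[f]·E[g] ≤ E[f·g]. -/
open MeasureTheory Filter

section Aux

/-- A coordinatewise increasing function on `Fin n → ℝ` is monotone. -/
lemma fkg_monotone_of_update {n : ℕ} {f : (Fin n → ℝ) → ℝ}
    (hf : ∀ (i : Fin n) (x : Fin n → ℝ), Monotone fun t => f (Function.update x i t)) :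
    Monotone f := by
  classical
  intro x y hxy
  have key : ∀ s : Finset (Fin n), f x ≤ f (fun i => if i ∈ s then y i else x i) := by
    intro s
    induction s using Finset.induction_on with
    | empty => simp
    | @insert a s ha ih =>
      refine le_trans ih ?_
      have h1 : (fun i => if i ∈ insert a s then y i else x i)
          = Function.update (fun i => if i ∈ s then y i else x i) a (y a) := by
        funext i
        by_cases h : i = a
        · subst h; simp
        · simp [Function.update_of_ne h, Finset.mem_insert, h]
      have h2 : (fun i => if i ∈ s then y i else x i)
          = Function.update (fun i => if i ∈ s then y i else x i) a (x a) := by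
        funext i
        by_cases h : i = a
        · subst h; simp [ha]
        · simp [Function.update_of_ne h]
      rw [h1]
      conv_lhs => rw [h2]
      exact hf a _ (hxy a)
  have h := key Finset.univ
  simpa using h

lemma fkg_insertNth_mono {n : ℕ} (i : Fin (n + 1)) {t t' : ℝ} {y y' : Fin n → ℝ}
    (ht : t ≤ t') (hy : y ≤ y') :
    Fin.insertNth (α := fun _ => ℝ) i t y ≤ Fin.insertNth (α := fun _ => ℝ) i t' y' := by
  intro j
  rcases eq_or_ne j i with rfl | hne
  · simpa using ht
  · obtain ⟨k, rfl⟩ := Fin.exists_succAbove_eq hne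
    simpa using hy k

/-- One-dimensional Chebyshev / FKG inequality with an a.e. comonotonicity set. -/
lemma fkg_dim_one {μ : Measure ℝ} [IsProbabilityMeasure μ] {F G : ℝ → ℝ}
    (hF : Integrable F μ) (hG : Integrable G μ) (hFG : Integrable (fun x => F x * G x) μ)
    (S : Set ℝ) (hS : ∀ᵐ x ∂μ, x ∈ S)
    (hmono : ∀ x ∈ S, ∀ y ∈ S, 0 ≤ (F x - F y) * (G x - G y)) :
    (∫ x, F x ∂μ) * (∫ x, G x ∂μ) ≤ ∫ x, F x * G x ∂μ := by
  set π := μ.prod μ with hπ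
  have mpfst : MeasurePreserving Prod.fst π μ :=
    ⟨measurable_fst, by rw [hπ]; simp⟩
  have mpsnd : MeasurePreserving Prod.snd π μ :=
    ⟨measurable_snd, by rw [hπ]; simp⟩
  have hA : Integrable (fun p : ℝ × ℝ => F p.1 * G p.1) π :=
    (mpfst.integrable_comp hFG.aestronglyMeasurable).2 hFG
  have hB : Integrable (fun p : ℝ × ℝ => F p.2 * G p.2) π :=
    (mpsnd.integrable_comp hFG.aestronglyMeasurable).2 hFG
  have hC : Integrable (fun p : ℝ × ℝ => F p.1 * G p.2) π := hF.mul_prod hG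
  have hD : Integrable (fun p : ℝ × ℝ => F p.2 * G p.1) π := by
    have : Integrable (fun p : ℝ × ℝ => G p.1 * F p.2) π := hG.mul_prod hF
    simpa [mul_comm] using this
  -- the key nonnegative integral
  have haeS : ∀ᵐ p ∂π, p.1 ∈ S ∧ p.2 ∈ S := by
    have hbad : π {p : ℝ × ℝ | ¬(p.1 ∈ S ∧ p.2 ∈ S)} = 0 := by
      have hSc : μ {x | x ∉ S} = 0 := ae_iff.1 hS
      have hsub : {p : ℝ × ℝ | ¬(p.1 ∈ S ∧ p.2 ∈ S)}
          ⊆ ({x | x ∉ S} ×ˢ Set.univ) ∪ (Set.univ ×ˢ {x | x ∉ S}) := by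
        intro p hp
        simp only [Set.mem_setOf_eq, not_and_or] at hp
        rcases hp with h | h
        · exact Or.inl ⟨h, trivial⟩
        · exact Or.inr ⟨trivial, h⟩
      refine le_antisymm ?_ zero_le
      refine le_trans (measure_mono hsub) ?_
      refine le_trans (measure_union_le _ _) ?_
      rw [hπ, Measure.prod_prod, Measure.prod_prod, hSc]
      simp
    exact hbad
  have key : 0 ≤ ∫ p, (F p.1 - F p.2) * (G p.1 - G p.2) ∂π := by
    refine integral_nonneg_of_ae ?_
    filter_upwards [haeS] with p hp
    exact hmono p.1 hp.1 p.2 hp.2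
  have expand : ∫ p, (F p.1 - F p.2) * (G p.1 - G p.2) ∂π
      = ((∫ p, F p.1 * G p.1 ∂π) + ∫ p, F p.2 * G p.2 ∂π)
        - ((∫ p, F p.1 * G p.2 ∂π) + ∫ p, F p.2 * G p.1 ∂π) := by
    have hfun : (fun p : ℝ × ℝ => (F p.1 - F p.2) * (G p.1 - G p.2))
        = fun p : ℝ × ℝ => (F p.1 * G p.1 + F p.2 * G p.2)
          - (F p.1 * G p.2 + F p.2 * G p.1) := by
      funext p; ring
    have hAB : Integrable (fun p : ℝ × ℝ => F p.1 * G p.1 + F p.2 * G p.2) π := hA.add hB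
    have hCD : Integrable (fun p : ℝ × ℝ => F p.1 * G p.2 + F p.2 * G p.1) π := hC.add hD
    rw [hfun, integral_sub hAB hCD, integral_add hA hB, integral_add hC hD]
  have eA : ∫ p, F p.1 * G p.1 ∂π = ∫ x, F x * G x ∂μ := by
    rw [integral_prod _ hA]
    simp [integral_const]
  have eB : ∫ p, F p.2 * G p.2 ∂π = ∫ x, F x * G x ∂μ := by
    rw [integral_prod_symm _ hB]
    simp [integral_const]
  have eC : ∫ p, F p.1 * G p.2 ∂π = (∫ x, F x ∂μ) * ∫ x, G x ∂μ := integral_prod_mul F G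
  have eD : ∫ p, F p.2 * G p.1 ∂π = (∫ x, G x ∂μ) * ∫ x, F x ∂μ := by
    have : (fun p : ℝ × ℝ => F p.2 * G p.1) = fun p : ℝ × ℝ => G p.1 * F p.2 := by
      funext p; ring
    rw [this]
    exact integral_prod_mul G F
  rw [expand, eA, eB, eC, eD] at key
  linarith

/-- FKG inequality for bounded measurable monotone functions, by induction on dimension. -/
lemma fkg_bounded : ∀ (n : ℕ) (μs : Fin n → Measure ℝ),
    (∀ i, IsProbabilityMeasure (μs i)) →
    ∀ (f g : (Fin n → ℝ) → ℝ), Monotone f → Monotone g →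
    ∀ Cf Cg : ℝ, (∀ x, |f x| ≤ Cf) → (∀ x, |g x| ≤ Cg) →
    AEStronglyMeasurable f (Measure.pi μs) → AEStronglyMeasurable g (Measure.pi μs) →
    (∫ x, f x ∂Measure.pi μs) * (∫ x, g x ∂Measure.pi μs)
      ≤ ∫ x, f x * g x ∂Measure.pi μs := by
  intro n
  induction n with
  | zero =>
    intro μs hprob f g hf hg Cf Cg hfb hgb hfm hgm
    haveI := hprob
    haveI : IsProbabilityMeasure (Measure.pi μs) := inferInstance
    have hsub : ∀ x : Fin 0 → ℝ, x = (fun i => i.elim0) := by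
      intro x; funext i; exact i.elim0
    set c : Fin 0 → ℝ := fun i => i.elim0 with hc
    have hfc : f = fun _ => f c := by funext x; rw [hsub x]
    have hgc : g = fun _ => g c := by funext x; rw [hsub x]
    rw [hfc, hgc]
    simp [integral_const]
  | succ n IH =>
    intro μs hprob f g hf hg Cf Cg hfb hgb hfm hgm
    haveI := hprob
    set i : Fin (n + 1) := 0 with hidef
    set ν : Measure (Fin n → ℝ) := Measure.pi (fun j => μs (i.succAbove j)) with hν
    haveI : IsProbabilityMeasure ν := by rw [hν]; infer_instance
    set π : Measure (ℝ × (Fin n → ℝ)) := (μs i).prod ν with hπ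
    set e := MeasurableEquiv.piFinSuccAbove (fun _ : Fin (n + 1) => ℝ) i with he
    have hmp : MeasurePreserving e (Measure.pi μs) π :=
      MeasureTheory.measurePreserving_piFinSuccAbove μs i
    set f' : ℝ × (Fin n → ℝ) → ℝ := fun p => f (i.insertNth p.1 p.2) with hf'
    set g' : ℝ × (Fin n → ℝ) → ℝ := fun p => g (i.insertNth p.1 p.2) with hg'
    have hesymm : ∀ p : ℝ × (Fin n → ℝ), e.symm p = i.insertNth p.1 p.2 := by
      intro p
      simp [he, MeasurableEquiv.piFinSuccAbove_symm_apply, Fin.insertNthEquiv]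
    have hfe : ∀ x, f' (e x) = f x := by
      intro x
      have : e.symm (e x) = x := e.symm_apply_apply x
      rw [hesymm] at this
      simp only [hf']
      rw [this]
    have hge : ∀ x, g' (e x) = g x := by
      intro x
      have : e.symm (e x) = x := e.symm_apply_apply x
      rw [hesymm] at this
      simp only [hg']
      rw [this]
    have hf'eq : f' = f ∘ e.symm := by
      funext p; simp [hesymm p, hf']
    have hg'eq : g' = g ∘ e.symm := by
      funext p; simp [hesymm p, hg']
    have hf'm : AEStronglyMeasurable f' π := by
      rw [hf'eq]
      exact hfm.comp_measurePreserving (hmp.symm e)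
    have hg'm : AEStronglyMeasurable g' π := by
      rw [hg'eq]
      exact hgm.comp_measurePreserving (hmp.symm e)
    have hCf0 : 0 ≤ Cf := le_trans (abs_nonneg _) (hfb (fun _ => 0))
    have hCg0 : 0 ≤ Cg := le_trans (abs_nonneg _) (hgb (fun _ => 0))
    have hf'b : ∀ p, |f' p| ≤ Cf := fun p => hfb _
    have hg'b : ∀ p, |g' p| ≤ Cg := fun p => hgb _
    have hf'i : Integrable f' π := by
      refine (integrable_const Cf).mono' hf'm ?_
      exact Filter.Eventually.of_forall fun p => by
        simpa [Real.norm_eq_abs] using hf'b p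
    have hg'i : Integrable g' π := by
      refine (integrable_const Cg).mono' hg'm ?_
      exact Filter.Eventually.of_forall fun p => by
        simpa [Real.norm_eq_abs] using hg'b p
    have hfg'i : Integrable (fun p => f' p * g' p) π := by
      refine (integrable_const (Cf * Cg)).mono' (hf'm.mul hg'm) ?_
      refine Filter.Eventually.of_forall fun p => ?_
      rw [Real.norm_eq_abs, abs_mul]
      exact mul_le_mul (hf'b p) (hg'b p) (abs_nonneg _) hCf0
    -- the marginal functions
    set F : ℝ → ℝ := fun t => ∫ y, f' (t, y) ∂ν with hF
    set G : ℝ → ℝ := fun t => ∫ y, g' (t, y) ∂ν with hG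
    set H : ℝ → ℝ := fun t => ∫ y, f' (t, y) * g' (t, y) ∂ν with hH
    have hFi : Integrable F (μs i) := hf'i.integral_prod_left
    have hGi : Integrable G (μs i) := hg'i.integral_prod_left
    have hHi : Integrable H (μs i) := hfg'i.integral_prod_left
    have hGb : ∀ t, |G t| ≤ Cg := by
      intro t
      have h := norm_integral_le_of_norm_le_const (μ := ν)
        (f := fun y => g' (t, y)) (C := Cg)
        (Filter.Eventually.of_forall fun y => by simpa [Real.norm_eq_abs] using hg'b (t, y))
      simpa [Real.norm_eq_abs, integral_const] using h
    have hFGi : Integrable (fun t => F t * G t) (μs i) := by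
      have := hFi.bdd_mul (f := G) hGi.aestronglyMeasurable
        (Filter.Eventually.of_forall (fun t => by simpa [Real.norm_eq_abs] using hGb t) :
          ∀ᵐ t ∂(μs i), ‖G t‖ ≤ Cg)
      simpa [mul_comm] using this
    -- the good set
    set S : Set ℝ := {t | Integrable (fun y => f' (t, y)) ν ∧ Integrable (fun y => g' (t, y)) ν}
      with hSdef
    have hS : ∀ᵐ t ∂(μs i), t ∈ S := by
      filter_upwards [hf'i.prod_right_ae, hg'i.prod_right_ae] with t h1 h2
      exact ⟨h1, h2⟩
    -- monotonicity of F, G on S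
    have hFmono : ∀ t ∈ S, ∀ t' ∈ S, t ≤ t' → F t ≤ F t' := by
      intro t ht t' ht' htt
      refine integral_mono ht.1 ht'.1 fun y => ?_
      exact hf (fkg_insertNth_mono i htt le_rfl)
    have hGmono : ∀ t ∈ S, ∀ t' ∈ S, t ≤ t' → G t ≤ G t' := by
      intro t ht t' ht' htt
      refine integral_mono ht.2 ht'.2 fun y => ?_
      exact hg (fkg_insertNth_mono i htt le_rfl)
    -- induction hypothesis pointwise
    have hIH : ∀ t ∈ S, F t * G t ≤ H t := by
      intro t ht
      exact IH (fun j => μs (i.succAbove j)) (fun j => hprob _)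
        (fun y => f' (t, y)) (fun y => g' (t, y))
        (fun y y' hy => hf (fkg_insertNth_mono i le_rfl hy))
        (fun y y' hy => hg (fkg_insertNth_mono i le_rfl hy))
        Cf Cg (fun y => hf'b (t, y)) (fun y => hg'b (t, y))
        ht.1.aestronglyMeasurable ht.2.aestronglyMeasurable
    -- transfer integrals
    have hti : ∀ (h : (Fin (n + 1) → ℝ) → ℝ) (h' : ℝ × (Fin n → ℝ) → ℝ),
        (∀ x, h' (e x) = h x) →
        ∫ x, h x ∂Measure.pi μs = ∫ p, h' p ∂π := by
      intro h h' hcomp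
      rw [← hmp.integral_comp' h']
      exact integral_congr_ae (Filter.Eventually.of_forall fun x => (hcomp x).symm)
    have ef : ∫ x, f x ∂Measure.pi μs = ∫ t, F t ∂(μs i) := by
      rw [hti f f' hfe, integral_prod _ hf'i]
    have eg : ∫ x, g x ∂Measure.pi μs = ∫ t, G t ∂(μs i) := by
      rw [hti g g' hge, integral_prod _ hg'i]
    have efg : ∫ x, f x * g x ∂Measure.pi μs = ∫ t, H t ∂(μs i) := by
      rw [hti (fun x => f x * g x) (fun p => f' p * g' p)
        (fun x => by show f' (e x) * g' (e x) = f x * g x; rw [hfe x, hge x]),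
        integral_prod _ hfg'i]
    rw [ef, eg, efg]
    have step1 : (∫ t, F t ∂(μs i)) * (∫ t, G t ∂(μs i)) ≤ ∫ t, F t * G t ∂(μs i) := by
      refine fkg_dim_one hFi hGi hFGi S hS ?_
      intro x hx y hy
      rcases le_total x y with h | h
      · have h1 : F x ≤ F y := hFmono x hx y hy h
        have h2 : G x ≤ G y := hGmono x hx y hy h
        nlinarith
      · have h1 : F y ≤ F x := hFmono y hy x hx h
        have h2 : G y ≤ G x := hGmono y hy x hx h
        nlinarith
    have step2 : ∫ t, F t * G t ∂(μs i) ≤ ∫ t, H t ∂(μs i) := by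
      refine integral_mono_ae hFGi hHi ?_
      filter_upwards [hS] with t ht
      exact hIH t ht
    exact le_trans step1 step2

/-- Truncation of a real number to `[-M, M]`. -/
noncomputable def fkgTrunc (M a : ℝ) : ℝ := max (min a M) (-M)

lemma fkgTrunc_mono (M : ℝ) : Monotone (fkgTrunc M) := fun a b hab =>
  max_le_max (min_le_min hab le_rfl) le_rfl

lemma fkgTrunc_abs_le (M a : ℝ) (hM : 0 ≤ M) : |fkgTrunc M a| ≤ |a| := by
  rw [abs_le]
  constructor
  · rcases le_total M |a| with h | h
    · exact le_trans (by linarith) (le_max_right _ _)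
    · refine le_trans ?_ (le_max_left _ _)
      exact le_min (neg_abs_le a) (by linarith [abs_nonneg a])
  · refine max_le (le_trans (min_le_left _ _) (le_abs_self a)) ?_
    linarith [abs_nonneg a]

lemma fkgTrunc_abs_le_M (M a : ℝ) (hM : 0 ≤ M) : |fkgTrunc M a| ≤ M := by
  rw [abs_le]
  exact ⟨le_max_right _ _, max_le (min_le_right _ _) (by linarith)⟩

lemma fkgTrunc_eq_self (M a : ℝ) (h : |a| ≤ M) : fkgTrunc M a = a := by
  have h1 : -M ≤ a := by cases abs_le.1 h; linarith
  have h2 : a ≤ M := (abs_le.1 h).2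
  rw [fkgTrunc, min_eq_left h2, max_eq_left h1]

lemma fkgTrunc_continuous (M : ℝ) : Continuous (fkgTrunc M) :=
  (continuous_id.min continuous_const).max continuous_const

end Aux

/-- FKG / Harris inequality for product probability measures on ℝⁿ. -/
theorem fkg_inequality (n : ℕ) (μs : Fin n → MeasureTheory.Measure ℝ)
    [∀ i, MeasureTheory.IsProbabilityMeasure (μs i)]
    (μ : MeasureTheory.Measure (Fin n → ℝ)) (hμ : μ = MeasureTheory.Measure.pi μs)
    (f g : (Fin n → ℝ) → ℝ)
    (hf : ∀ (i : Fin n) (x : Fin n → ℝ), Monotone fun t => f (Function.update x i t))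
    (hg : ∀ (i : Fin n) (x : Fin n → ℝ), Monotone fun t => g (Function.update x i t))
    (hfi : MeasureTheory.Integrable f μ) (hgi : MeasureTheory.Integrable g μ)
    (hfgi : MeasureTheory.Integrable (fun x => f x * g x) μ) :
    (∫ x, f x ∂μ) * (∫ x, g x ∂μ) ≤ ∫ x, f x * g x ∂μ := by
  subst hμ
  have hfmono : Monotone f := fkg_monotone_of_update hf
  have hgmono : Monotone g := fkg_monotone_of_update hg
  set μ := MeasureTheory.Measure.pi μs with hμdef
  -- truncated versions
  set fM : ℕ → (Fin n → ℝ) → ℝ := fun M x => fkgTrunc M (f x) with hfM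
  set gM : ℕ → (Fin n → ℝ) → ℝ := fun M x => fkgTrunc M (g x) with hgM
  have hMnn : ∀ M : ℕ, (0 : ℝ) ≤ M := fun M => Nat.cast_nonneg M
  have hineq : ∀ M : ℕ,
      (∫ x, fM M x ∂μ) * (∫ x, gM M x ∂μ) ≤ ∫ x, fM M x * gM M x ∂μ := by
    intro M
    refine fkg_bounded n μs (fun i => inferInstance) (fM M) (gM M)
      (fun x y hxy => fkgTrunc_mono _ (hfmono hxy))
      (fun x y hxy => fkgTrunc_mono _ (hgmono hxy))
      M M
      (fun x => fkgTrunc_abs_le_M _ _ (hMnn M))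
      (fun x => fkgTrunc_abs_le_M _ _ (hMnn M))
      ((fkgTrunc_continuous (M : ℝ)).comp_aestronglyMeasurable hfi.aestronglyMeasurable)
      ((fkgTrunc_continuous (M : ℝ)).comp_aestronglyMeasurable hgi.aestronglyMeasurable)
  -- convergence of the truncations
  have hconv : ∀ (h : (Fin n → ℝ) → ℝ) (x : Fin n → ℝ),
      Tendsto (fun M : ℕ => fkgTrunc M (h x)) atTop (nhds (h x)) := by
    intro h x
    refine Tendsto.congr' ?_ tendsto_const_nhds
    rw [Filter.EventuallyEq, eventually_atTop]
    refine ⟨⌈|h x|⌉₊, fun M hM => ?_⟩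
    exact (fkgTrunc_eq_self _ _ (le_trans (Nat.le_ceil _) (Nat.cast_le.2 hM))).symm
  have t1 : Tendsto (fun M : ℕ => ∫ x, fM M x ∂μ) atTop (nhds (∫ x, f x ∂μ)) := by
    refine tendsto_integral_of_dominated_convergence (fun x => |f x|)
      (fun M => ((fkgTrunc_continuous ((M : ℕ) : ℝ)).comp_aestronglyMeasurable
        hfi.aestronglyMeasurable)) hfi.abs ?_ ?_
    · intro M
      exact Filter.Eventually.of_forall fun x => by
        simpa [Real.norm_eq_abs] using fkgTrunc_abs_le _ (f x) (hMnn M)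
    · exact Filter.Eventually.of_forall fun x => hconv f x
  have t2 : Tendsto (fun M : ℕ => ∫ x, gM M x ∂μ) atTop (nhds (∫ x, g x ∂μ)) := by
    refine tendsto_integral_of_dominated_convergence (fun x => |g x|)
      (fun M => ((fkgTrunc_continuous ((M : ℕ) : ℝ)).comp_aestronglyMeasurable
        hgi.aestronglyMeasurable)) hgi.abs ?_ ?_
    · intro M
      exact Filter.Eventually.of_forall fun x => by
        simpa [Real.norm_eq_abs] using fkgTrunc_abs_le _ (g x) (hMnn M)
    · exact Filter.Eventually.of_forall fun x => hconv g x
  have t3 : Tendsto (fun M : ℕ => ∫ x, fM M x * gM M x ∂μ) atTop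
      (nhds (∫ x, f x * g x ∂μ)) := by
    refine tendsto_integral_of_dominated_convergence (fun x => |f x * g x|)
      (fun M => (((fkgTrunc_continuous ((M : ℕ) : ℝ)).comp_aestronglyMeasurable
        hfi.aestronglyMeasurable).mul
        ((fkgTrunc_continuous ((M : ℕ) : ℝ)).comp_aestronglyMeasurable
          hgi.aestronglyMeasurable))) hfgi.abs ?_ ?_
    · intro M
      refine Filter.Eventually.of_forall fun x => ?_
      have h1 := fkgTrunc_abs_le _ (f x) (hMnn M)
      have h2 := fkgTrunc_abs_le _ (g x) (hMnn M)
      have : |fkgTrunc M (f x)| * |fkgTrunc M (g x)| ≤ |f x * g x| := by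
        rw [abs_mul]
        exact mul_le_mul h1 h2 (abs_nonneg _) (abs_nonneg _)
      simpa [Real.norm_eq_abs, hfM, hgM] using this
    · refine Filter.Eventually.of_forall fun x => ?_
      exact (hconv f x).mul (hconv g x)
  exact le_of_tendsto_of_tendsto' (t1.mul t2) t3 hineq
end
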